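/- Let A be a linearly topologized commutative topological ring and let A⁺ ⊆ A be an open subring which is integrally closed in A and such that A⁺ ⊆ A is a Prüfer extension. Let σ: A → Â be the canonical map to the completion of A and let Â⁺ be the closure of σ(A⁺) in Â. Then Â⁺ ⊆ Â is a Prüfer extension. -/

import Mathlib

open UniformSpace

/-- A subring `S` of a commutative ring `R` makes `(R, S)` a *local pair* if `R` is local and
every element of `R` not lying in `S` is a unit of `R` whose inverse lies in `S`. -/
def Subring.IsLocalPair {R : Type*} [CommRing R] (S : Subring R) : Prop :=
  IsLocalRing R ∧ ∀ x : R, x ∉ S → ∃ y ∈ S, x * y = 1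

/-- A subring `S ⊆ R` is a *Prüfer extension* if for every maximal ideal `P` of `S`,
the localizations of `S` and `R` at the multiplicative set `S \ P` form a local pair;
here the localization of `S` at `P` is identified with its image (the range of the canonical
map) in the localization of `R` at (the image of) `S \ P`. -/
def Subring.IsPruferExtension {R : Type*} [CommRing R] (S : Subring R) : Prop :=
  ∀ (P : Ideal ↥S) (hP : P.IsMaximal),
    haveI : P.IsPrime := hP.isPrime
    Subring.IsLocalPair
      (RingHom.range
        (IsLocalization.map (Localization (P.primeCompl.map (algebraMap ↥S R)))
          (algebraMap ↥S R) (Submonoid.le_comap_map P.primeCompl) :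
          Localization P.primeCompl →+* Localization (P.primeCompl.map (algebraMap ↥S R))))

/-!
`S ⊆ R` is Prüfer iff every `x ∈ R` admits `b, d ∈ (S :_S x)` with `b + d x = 1`: at a maximal
ideal `P` of `S`, either `b ∉ P` and `x = bx / b ∈ S_P`, or `dx ∉ P` and `x⁻¹ = d / dx ∈ S_P`;
conversely, if `(S :_S x) + (S ∩ S x)` lay in a maximal ideal `P`, the local pair at `P` would
produce an element of it outside `P`. This criterion passes to the completion: since `A⁺` is
open, every `ξ ∈ Â` is `σ x + η` with `η ∈ Â⁺`, and `b' = σ b - σ d η`, `d' = σ d` work for `ξ`.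
-/

namespace Subring

variable {R : Type*} [CommRing R] (S : Subring R)

def colon (x : R) : Ideal S where
  carrier := {t | (t : R) * x ∈ S}
  add_mem' ha hb := by simpa [add_mul] using S.add_mem ha hb
  zero_mem' := by simp
  smul_mem' c t ht := by simpa [mul_assoc] using S.mul_mem c.2 ht

@[simp]
lemma mem_colon {x : R} {t : S} : t ∈ S.colon x ↔ (t : R) * x ∈ S := Iff.rfl

section Localization

variable (P : Ideal S) [P.IsPrime]

local notation "Rₚ" => Localization (P.primeCompl.map (algebraMap S R))

noncomputable abbrev localizationMap : Localization P.primeCompl →+* Rₚ :=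
  IsLocalization.map _ (algebraMap S R) (Submonoid.le_comap_map P.primeCompl)

variable {S P}

lemma isUnit_algebraMap_localization {s : S} (hs : s ∉ P) : IsUnit (algebraMap R Rₚ s) :=
  IsLocalization.map_units _ (⟨s, Submonoid.mem_map_of_mem (algebraMap S R) hs⟩ :
    P.primeCompl.map (algebraMap S R))

lemma mem_range_localizationMap_of_mul_eq {z : Rₚ} {s a : S} (hs : s ∉ P)
    (h : z * algebraMap R Rₚ s = algebraMap R Rₚ a) : z ∈ (localizationMap S P).range :=
  ⟨IsLocalization.mk' _ a (⟨s, hs⟩ : P.primeCompl), by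
    rw [IsLocalization.map_mk', eq_comm, IsLocalization.eq_mk'_iff_mul_eq]
    exact h⟩

lemma exists_mul_eq_of_mem_range_localizationMap {z : Rₚ}
    (hz : z ∈ (localizationMap S P).range) :
    ∃ a s : S, s ∉ P ∧ z * algebraMap R Rₚ s = algebraMap R Rₚ a := by
  obtain ⟨ζ, rfl⟩ := hz
  obtain ⟨⟨a, s⟩, rfl⟩ := IsLocalization.mk'_surjective P.primeCompl ζ
  exact ⟨a, s, s.2, by rw [IsLocalization.map_mk']; exact IsLocalization.mk'_spec _ _ _⟩

lemma exists_inv_mem_range_localizationMap_of_mul_eq {z : Rₚ} {p q : S} (hq : q ∉ P)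
    (h : z * algebraMap R Rₚ p = algebraMap R Rₚ q) :
    ∃ y ∈ (localizationMap S P).range, z * y = 1 := by
  obtain ⟨u, hu⟩ := isUnit_algebraMap_localization hq
  refine ⟨algebraMap R Rₚ p * ↑u⁻¹, mem_range_localizationMap_of_mul_eq (a := p) hq ?_, ?_⟩
  · rw [← hu, Units.inv_mul_cancel_right]
  · rw [← mul_assoc, h, ← hu, Units.mul_inv]

lemma exists_notMem_mul_eq_of_algebraMap_eq {r r' : R}
    (h : algebraMap R Rₚ r = algebraMap R Rₚ r') : ∃ τ : S, τ ∉ P ∧ τ * r = τ * r' := by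
  obtain ⟨⟨c, τ, hτ, rfl⟩, hc⟩ :=
    (IsLocalization.eq_iff_exists (P.primeCompl.map (algebraMap S R)) _).mp h
  exact ⟨τ, hτ, hc⟩

lemma mem_range_localizationMap_or_exists_mul_eq_one
    (hS : ∀ x : R, ∃ b ∈ S.colon x, ∃ d ∈ S.colon x, (b : R) + d * x = 1) (z : Rₚ) :
    z ∈ (localizationMap S P).range ∨ ∃ y ∈ (localizationMap S P).range, z * y = 1 := by
  obtain ⟨⟨r, _, s, hs, rfl⟩, hz⟩ := IsLocalization.surj (P.primeCompl.map (algebraMap S R)) z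
  obtain ⟨b, hb, d, hd, hbd⟩ := hS r
  have hb_or_hd : b ∉ P ∨ (⟨_, hd⟩ : S) ∉ P := by
    by_contra! h
    have hsum : b + ⟨_, hd⟩ = (1 : S) := Subtype.ext hbd
    exact ‹P.IsPrime›.ne_top (P.eq_top_iff_one.mpr (hsum ▸ P.add_mem h.1 h.2))
  rcases hb_or_hd with hb' | hd'
  · refine .inl (mem_range_localizationMap_of_mul_eq (s := b * s) (a := ⟨_, hb⟩)
      (P.primeCompl.mul_mem hb' hs) ?_)
    simp only [coe_mul, map_mul]
    rw [mul_left_comm]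
    exact congrArg _ hz
  · refine .inr (exists_inv_mem_range_localizationMap_of_mul_eq (p := d * s) hd' ?_)
    simp only [coe_mul, map_mul]
    rw [mul_left_comm]
    exact congrArg _ hz

lemma isLocalPair_range_localizationMap
    (hS : ∀ x : R, ∃ b ∈ S.colon x, ∃ d ∈ S.colon x, (b : R) + d * x = 1) :
    (localizationMap S P).range.IsLocalPair := by
  have : Nontrivial Rₚ := by
    rw [← not_subsingleton_iff_nontrivial,
      IsLocalization.subsingleton_iff (M := P.primeCompl.map (algebraMap S R))]
    rintro ⟨s, hs, hs0⟩
    exact hs ((Subtype.ext hs0 : s = 0) ▸ P.zero_mem)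
  have hdich := mem_range_localizationMap_or_exists_mul_eq_one (P := P) hS
  refine ⟨.of_isUnit_or_isUnit_one_sub_self fun z => ?_, fun z hz => (hdich z).resolve_left hz⟩
  rcases hdich z with ⟨ζ, rfl⟩ | ⟨y, -, hzy⟩
  · refine (IsLocalRing.isUnit_or_isUnit_one_sub_self ζ).imp (·.map _) fun h => ?_
    simpa using h.map (localizationMap S P)
  · exact .inl (.of_mul_eq_one _ hzy)

end Localization

theorem isPruferExtension_iff : S.IsPruferExtension ↔
    ∀ x : R, ∃ b ∈ S.colon x, ∃ d ∈ S.colon x, (b : R) + d * x = 1 := by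
  refine ⟨fun hS x => ?_, fun hS P hP => isLocalPair_range_localizationMap (P := P) hS⟩
  let I : Ideal S := (Submodule.span S {x}).comap (Algebra.linearMap S R)
  suffices hI : S.colon x ⊔ I = ⊤ by
    obtain ⟨b, hb, e, he, hbe⟩ := Submodule.mem_sup.mp (hI ▸ Submodule.mem_top : (1 : S) ∈ _)
    obtain ⟨d, hd⟩ := Submodule.mem_span_singleton.mp he
    have hdx : (d : R) * x = e := hd
    refine ⟨b, hb, d, show (d : R) * x ∈ S from hdx ▸ e.2, ?_⟩
    rw [hdx]
    exact congrArg Subtype.val hbe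
  by_contra hI
  obtain ⟨m, hm, hle⟩ := Ideal.exists_le_maximal _ hI
  have := hm.isPrime
  by_cases hx : algebraMap R (Localization (m.primeCompl.map (algebraMap S R))) x ∈
      (localizationMap S m).range
  · obtain ⟨a, s, hs, hxs⟩ := exists_mul_eq_of_mem_range_localizationMap hx
    rw [← map_mul] at hxs
    obtain ⟨τ, hτ, hτx⟩ := exists_notMem_mul_eq_of_algebraMap_eq hxs
    refine m.primeCompl.mul_mem hτ hs (hle (Ideal.mem_sup_left ?_))
    have hτsx : ((τ * s : S) : R) * x = (τ * a : S) := by push_cast; linear_combination hτx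
    exact show ((τ * s : S) : R) * x ∈ S from hτsx ▸ (τ * a).2
  · obtain ⟨y, hy, hxy⟩ := (hS m hm).2 _ hx
    obtain ⟨a, s, hs, hya⟩ := exists_mul_eq_of_mem_range_localizationMap hy
    obtain ⟨τ, hτ, hτx⟩ := exists_notMem_mul_eq_of_algebraMap_eq (P := m) (r := x * a) (r' := s)
      (by rw [map_mul, ← hya, ← mul_assoc, hxy, one_mul])
    refine m.primeCompl.mul_mem hτ hs (hle (Ideal.mem_sup_right ?_))
    refine Submodule.mem_span_singleton.mpr ⟨τ * a, ?_⟩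
    show ((τ * a : S) : R) * x = (τ * s : S)
    push_cast
    linear_combination hτx

variable {S} in
lemma exists_colon_add_mul_eq_one_of_map {R' : Type*} [CommRing R'] {T : Subring R'}
    {f : R →+* R'} (hST : S.map f ≤ T) {x : R}
    (hx : ∃ b ∈ S.colon x, ∃ d ∈ S.colon x, (b : R) + d * x = 1) {η : R'} (hη : η ∈ T) :
    ∃ b ∈ T.colon (f x + η), ∃ d ∈ T.colon (f x + η), (b : R') + d * (f x + η) = 1 := by
  obtain ⟨b, hb, d, hd, hbd⟩ := hx
  have hf {a : R} (ha : a ∈ S) : f a ∈ T := hST ⟨a, ha, rfl⟩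
  have hdξ : f d * (f x + η) ∈ T := by
    rw [mul_add, ← map_mul]
    exact T.add_mem (hf hd) (T.mul_mem (hf d.2) hη)
  refine ⟨⟨f b - f d * η, T.sub_mem (hf b.2) (T.mul_mem (hf d.2) hη)⟩, ?_,
    ⟨f d, hf d.2⟩, hdξ, ?_⟩
  · have hbξ : (f b - f d * η) * (f x + η) = f (b * x) + f b * η - f d * (f x + η) * η := by
      rw [map_mul]; ring
    rw [mem_colon, hbξ]
    exact T.sub_mem (T.add_mem (hf hb) (T.mul_mem (hf b.2) hη)) (T.mul_mem hdξ hη)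
  · have hfbd := congrArg f hbd
    rw [map_add, map_mul, map_one] at hfbd
    linear_combination hfbd

end Subring

lemma UniformSpace.Completion.exists_sub_coe_mem_closure_image {A : Type*} [UniformSpace A]
    [AddGroup A] [IsUniformAddGroup A] {U : Set A} (hU : IsOpen U) (h0 : (0 : A) ∈ U)
    (ξ : Completion A) : ∃ x : A, ξ - x ∈ closure ((↑) '' U : Set (Completion A)) := by
  obtain ⟨O, hO, rfl⟩ := isDenseInducing_coe.isInducing.isOpen_iff.mp hU
  have hO_sub : O ⊆ closure ((↑) '' ((↑) ⁻¹' O : Set A)) := by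
    rw [Set.image_preimage_eq_inter_range]
    simpa [denseRange_coe.closure_range] using hO.inter_closure (t := Set.range ((↑) : A → _))
  obtain ⟨x, hx⟩ := denseRange_coe.exists_mem_open (hO.preimage (continuous_sub_left ξ))
    ⟨ξ, by simpa [Completion.coe_zero] using h0⟩
  exact ⟨x, hO_sub hx⟩

theorem statement6 {A : Type*} [CommRing A] [UniformSpace A] [IsUniformAddGroup A]
    [IsTopologicalRing A]
    (Aplus : Subring A) (hopen : IsOpen (Aplus : Set A))
    (hpruf : Aplus.IsPruferExtension) :
    ((Aplus.map (Completion.coeRingHom : A →+* Completion A)).topologicalClosure :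
      Subring (Completion A)).IsPruferExtension := by
  rw [Subring.isPruferExtension_iff] at hpruf ⊢
  intro ξ
  obtain ⟨x, hx⟩ := Completion.exists_sub_coe_mem_closure_image hopen Aplus.zero_mem ξ
  have hξ : Completion.coeRingHom x + (ξ - x) = ξ := add_sub_cancel _ _
  simpa only [hξ] using Subring.exists_colon_add_mul_eq_one_of_map
    (Subring.le_topologicalClosure (Aplus.map Completion.coeRingHom)) (hpruf x) hx
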